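/- Let d(s) = s^{1/2} + 15/2 − ((1/6)s^{1/2} + 20/7)e^{−2.5 s} + (80/11)e^{−7.5 s}, where s^{1/2} is the principal branch of the complex square root (the fractional characteristic function with nominal delay τ = 2.5). Then there exists a sequence (s_j) of zeros of d with Im s_j → +∞ and Re s_j → −(ln 6)/2.5; that is, d has a chain of zeros asymptotic to the vertical line Re s = −(ln 6)/2.5 ≈ −0.7167, and this line lies in the open left half-plane. -/

import Mathlib

open Filter Topology

open scoped NNReal

namespace FracChainAux

noncomputable def Pf (w : ℂ) : ℂ := 15/2 - (20/7) * w + (80/11) * w^3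

noncomputable def wf (s : ℂ) : ℂ := Complex.exp (-(2.5 * s))

noncomputable def qf (s : ℂ) : ℂ := s ^ ((1:ℂ)/2)

noncomputable def Gf (s : ℂ) : ℂ := 6 + 6 * Pf (wf s) / qf s

noncomputable def Tf (k : ℕ) (s : ℂ) : ℂ :=
  (2 * Real.pi * k * Complex.I - Complex.log (Gf s)) / 2.5

noncomputable def ck (k : ℕ) : ℂ :=
  ((-(Real.log 6)/2.5 : ℝ) : ℂ) + ((2 * Real.pi * k / 2.5 : ℝ) : ℂ) * Complex.I

lemma ck_re (k : ℕ) : (ck k).re = -(Real.log 6)/2.5 := by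
  simp only [ck, Complex.add_re, Complex.ofReal_re, Complex.mul_re, Complex.ofReal_im,
    Complex.I_re, Complex.I_im]
  ring

lemma ck_im (k : ℕ) : (ck k).im = 2 * Real.pi * k / 2.5 := by
  simp only [ck, Complex.add_im, Complex.ofReal_im, Complex.mul_im, Complex.ofReal_re,
    Complex.I_re, Complex.I_im]
  ring

lemma Tf_sub_ck (k : ℕ) (s : ℂ) :
    Tf k s - ck k = (((Real.log 6 : ℝ) : ℂ) - Complex.log (Gf s)) / 2.5 := by
  rw [Tf, ck]
  have h25 : ((2.5:ℝ):ℂ) = (2.5:ℂ) := by norm_num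
  push_cast [h25]
  ring

lemma abs_q (s : ℂ) : ‖qf s‖ = Real.sqrt (‖s‖) := by
  rw [qf, show ((1:ℂ)/2) = (((1/2 : ℝ)) : ℂ) by norm_num, Complex.norm_cpow_real,
    Real.sqrt_eq_rpow]

lemma log6_ge : 1 ≤ Real.log 6 := by
  rw [Real.le_log_iff_exp_le (by norm_num)]
  have := Real.exp_one_lt_d9
  linarith

lemma log6_le : Real.log 6 ≤ 2 := by
  have h1 : Real.log 6 ≤ 6 - 1 := by
    simpa using Real.log_le_sub_one_of_pos (by norm_num : (0:ℝ) < 6)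
  -- sharper: log 6 = log 2 + log 3 not needed; use exp 2 ≥ 6
  rw [show (2:ℝ) = Real.log (Real.exp 2) by rw [Real.log_exp]]
  apply Real.log_le_log (by norm_num)
  have h := Real.exp_one_gt_d9
  have h2 : Real.exp 2 = Real.exp 1 * Real.exp 1 := by
    rw [← Real.exp_add]; norm_num
  nlinarith [Real.exp_pos (1:ℝ)]

lemma exp_quarter_le : Real.exp (1/4) ≤ 4/3 := by
  have h1 := Real.add_one_le_exp (-(1/4) : ℝ)
  have h2 : Real.exp (-(1/4) : ℝ) = (Real.exp (1/4))⁻¹ := Real.exp_neg _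
  have h3 := Real.exp_pos ((1:ℝ)/4)
  rw [h2] at h1
  have h1' : (3/4 : ℝ) ≤ (Real.exp (1/4))⁻¹ := by linarith
  have h4 := mul_le_mul_of_nonneg_left h1' h3.le
  rw [mul_inv_cancel₀ h3.ne'] at h4
  linarith


noncomputable def Gd (s : ℂ) : ℂ :=
  (6 * ((-(20/7) + (240/11) * (wf s)^2) * (-(2.5:ℂ) * wf s)) * qf s
    - 6 * Pf (wf s) * (((1:ℂ)/2) * s ^ ((1:ℂ)/2 - 1))) / (qf s)^2

lemma abs_lit (x : ℝ) (hx : 0 ≤ x) : ‖(x:ℂ)‖ = x := by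
  rw [Complex.norm_real, Real.norm_eq_abs, abs_of_nonneg hx]

lemma hPb (w : ℂ) (hw : ‖w‖ ≤ 8) : ‖Pf w‖ ≤ 3800 := by
  have h0 : (0:ℝ) ≤ ‖w‖ := norm_nonneg w
  have h3 : ‖w‖ ^ 3 ≤ 512 := by
    calc ‖w‖ ^ 3 ≤ 8^3 := pow_le_pow_left₀ h0 hw 3
      _ = 512 := by norm_num
  calc ‖Pf w‖
      ≤ ‖15/2 - (20/7)*w‖ + ‖(80/11)*w^3‖ := by
        rw [Pf]; exact norm_add_le _ _
    _ ≤ ‖(15/2 : ℂ)‖ + ‖(20/7)*w‖ + ‖(80/11)*w^3‖ := by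
        linarith [norm_sub_le (15/2 : ℂ) ((20/7)*w)]
    _ ≤ 3800 := by
        rw [norm_mul, norm_mul, norm_pow]
        rw [show ((15:ℂ)/2) = (((15/2:ℝ)):ℂ) by norm_num,
          show ((20:ℂ)/7) = (((20/7:ℝ)):ℂ) by norm_num,
          show ((80:ℂ)/11) = (((80/11:ℝ)):ℂ) by norm_num,
          abs_lit _ (by norm_num), abs_lit _ (by norm_num), abs_lit _ (by norm_num)]
        nlinarith

lemma hP'b (w : ℂ) (hw : ‖w‖ ≤ 8) :
    ‖-(20/7) + (240/11) * w^2‖ ≤ 1400 := by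
  have h0 : (0:ℝ) ≤ ‖w‖ := norm_nonneg w
  have h2 : ‖w‖ ^ 2 ≤ 64 := by
    calc ‖w‖ ^ 2 ≤ 8^2 := pow_le_pow_left₀ h0 hw 2
      _ = 64 := by norm_num
  calc ‖-(20/7) + (240/11) * w^2‖
      ≤ ‖(-(20/7) : ℂ)‖ + ‖(240/11) * w^2‖ := norm_add_le _ _
    _ ≤ 1400 := by
        rw [norm_neg, norm_mul, norm_pow,
          show ((20:ℂ)/7) = (((20/7:ℝ)):ℂ) by norm_num,
          show ((240:ℂ)/11) = (((240/11:ℝ)):ℂ) by norm_num,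
          abs_lit _ (by norm_num), abs_lit _ (by norm_num)]
        nlinarith

set_option maxHeartbeats 2000000 in
lemma key (k : ℕ) (hk : 10^12 ≤ k) :
    ∃ y : ℂ,
      (y ^ ((1:ℂ)/2) + 15/2
        - ((1/6) * y ^ ((1:ℂ)/2) + 20/7) * Complex.exp (-(2.5 * y))
        + (80/11) * Complex.exp (-(7.5 * y)) = 0) ∧
      (k:ℝ) ≤ y.im ∧
      |y.re - (-(Real.log 6)/2.5)| ≤ 22800 / Real.sqrt (k:ℝ) := by
  have hπ := Real.pi_gt_three
  have hπ0 := Real.pi_pos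
  have hkR : (10^12 : ℝ) ≤ (k:ℝ) := by exact_mod_cast hk
  have hk0 : (0:ℝ) ≤ (k:ℝ) := Nat.cast_nonneg k
  set B : Set ℂ := Metric.closedBall (ck k) (1/10) with hB
  -- imaginary part lower bound
  have him : ∀ s ∈ B, (10:ℝ)^12 ≤ s.im ∧ (k:ℝ) ≤ s.im := by
    intro s hs
    rw [hB, Metric.mem_closedBall, Complex.dist_eq] at hs
    have h1 : |s.im - (ck k).im| ≤ 1/10 :=
      le_trans (by simpa using Complex.abs_im_le_norm (s - ck k)) hs
    rw [ck_im, show (2.5:ℝ) = 5/2 by norm_num] at h1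
    have h2 := abs_le.1 h1
    have h3 : (3:ℝ) * k ≤ Real.pi * k := mul_le_mul_of_nonneg_right hπ.le hk0
    constructor <;> nlinarith [h2.1, h2.2]
  have habs : ∀ s ∈ B, (10:ℝ)^12 ≤ ‖s‖ ∧ (k:ℝ) ≤ ‖s‖ := by
    intro s hs
    have h1 : s.im ≤ ‖s‖ :=
      le_trans (le_abs_self _) (Complex.abs_im_le_norm s)
    exact ⟨le_trans (him s hs).1 h1, le_trans (him s hs).2 h1⟩
  have hre : ∀ s ∈ B, |s.re + Real.log 6 * (2/5)| ≤ 1/10 := by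
    intro s hs
    rw [hB, Metric.mem_closedBall, Complex.dist_eq] at hs
    have h1 : |s.re - (ck k).re| ≤ 1/10 :=
      le_trans (by simpa using Complex.abs_re_le_norm (s - ck k)) hs
    rw [ck_re, show (2.5:ℝ) = 5/2 by norm_num] at h1
    convert h1 using 2
    ring
  have habsq : ∀ s ∈ B, (10:ℝ)^6 ≤ ‖qf s‖ := by
    intro s hs
    rw [abs_q]
    have h0 : Real.sqrt ((10:ℝ)^12) = 10^6 := by
      rw [show ((10:ℝ)^12) = ((10:ℝ)^6)^2 by ring, Real.sqrt_sq (by positivity)]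
    calc ((10:ℝ)^6) = Real.sqrt ((10:ℝ)^12) := h0.symm
      _ ≤ Real.sqrt (‖s‖) := Real.sqrt_le_sqrt (habs s hs).1
  have hqne : ∀ s ∈ B, qf s ≠ 0 := by
    intro s hs h0
    have := habsq s hs
    rw [h0, norm_zero] at this
    norm_num at this
  have hsim : ∀ s ∈ B, 0 < s.im := fun s hs => by
    linarith [(him s hs).1]
  have hslit : ∀ s ∈ B, s ∈ Complex.slitPlane := fun s hs =>
    Complex.mem_slitPlane_iff.2 (Or.inr (hsim s hs).ne')
  have hs0 : ∀ s ∈ B, s ≠ 0 := by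
    intro s hs h0
    have := hsim s hs
    rw [h0] at this
    simp at this
  -- |w| ≤ 8
  have hw8 : ∀ s ∈ B, ‖wf s‖ ≤ 8 := by
    intro s hs
    rw [wf, Complex.norm_exp]
    have h1 : (-(2.5 * s)).re = -(5/2 * s.re) := by
      simp [Complex.neg_re, Complex.mul_re]
      norm_num
    rw [h1]
    have h2 := abs_le.1 (hre s hs)
    have h3 : -(5/2 * s.re) ≤ Real.log 6 + 1/4 := by nlinarith [h2.1]
    calc Real.exp (-(5/2 * s.re)) ≤ Real.exp (Real.log 6 + 1/4) := Real.exp_le_exp.2 h3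
      _ = 6 * Real.exp (1/4) := by rw [Real.exp_add, Real.exp_log (by norm_num)]
      _ ≤ 8 := by nlinarith [exp_quarter_le, Real.exp_pos ((1:ℝ)/4)]
  -- G close to 6
  have hG6 : ∀ s ∈ B, ‖Gf s - 6‖ ≤ 22800 / ‖qf s‖ := by
    intro s hs
    have h1 : Gf s - 6 = 6 * Pf (wf s) / qf s := by rw [Gf]; ring
    rw [h1, norm_div, norm_mul, show ((6:ℂ)) = (((6:ℝ)):ℂ) by norm_num,
      abs_lit _ (by norm_num)]
    have h2 := hPb (wf s) (hw8 s hs)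
    have h3 : (0:ℝ) < ‖qf s‖ := by linarith [habsq s hs]
    rw [div_le_div_iff₀ h3 h3]
    nlinarith
  have hG6' : ∀ s ∈ B, ‖Gf s - 6‖ ≤ 1/40 := by
    intro s hs
    calc ‖Gf s - 6‖ ≤ 22800 / ‖qf s‖ := hG6 s hs
      _ ≤ 22800 / 10^6 := by
          gcongr
          exact habsq s hs
      _ ≤ 1/40 := by norm_num
  have hGre : ∀ s ∈ B, 5 ≤ (Gf s).re := by
    intro s hs
    have h1 : |(Gf s - 6).re| ≤ 1/40 :=
      le_trans (Complex.abs_re_le_norm _) (hG6' s hs)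
    have h2 : (Gf s - 6).re = (Gf s).re - 6 := by simp
    rw [h2] at h1
    have := abs_le.1 h1
    linarith [this.1]
  have hGabs : ∀ s ∈ B, 5 ≤ ‖Gf s‖ := fun s hs =>
    le_trans (hGre s hs) (Complex.re_le_norm _)
  have hGne : ∀ s ∈ B, Gf s ≠ 0 := by
    intro s hs h0
    have := hGabs s hs
    rw [h0, norm_zero] at this
    norm_num at this
  have hGslit : ∀ s ∈ B, Gf s ∈ Complex.slitPlane := fun s hs =>
    Complex.mem_slitPlane_iff.2 (Or.inl (by linarith [hGre s hs]))
  have h25abs : ‖(2.5:ℂ)‖ = 5/2 := by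
    rw [show (2.5:ℂ) = (((5/2:ℝ)):ℂ) by norm_num, Complex.norm_real, Real.norm_eq_abs]; norm_num
  -- derivatives
  have hwd : ∀ s : ℂ, HasDerivAt wf (-(2.5:ℂ) * wf s) s := by
    intro s
    have h1 : HasDerivAt (fun s : ℂ => -(2.5 * s)) (-(2.5:ℂ)) s := by
      simpa using ((hasDerivAt_id s).const_mul (2.5:ℂ)).fun_neg
    have h2 := h1.cexp
    rw [show Complex.exp (-(2.5*s)) * -(2.5:ℂ) = -(2.5:ℂ) * wf s by rw [wf]; ring] at h2
    exact h2
  have hqd : ∀ s ∈ B, HasDerivAt qf (((1:ℂ)/2) * s ^ ((1:ℂ)/2 - 1)) s := fun s hs =>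
    (Complex.hasStrictDerivAt_cpow_const (hslit s hs)).hasDerivAt
  have hPd : ∀ s : ℂ, HasDerivAt (fun s => Pf (wf s))
      ((-(20/7) + (240/11) * (wf s)^2) * (-(2.5:ℂ) * wf s)) s := by
    intro s
    have hA : HasDerivAt Pf (-(20/7) + (240/11) * (wf s)^2) (wf s) := by
      have h1 : HasDerivAt (fun w : ℂ => 15/2 - (20/7)*w + (80/11)*w^3)
          (0 - (20/7)*1 + (80/11)*((3:ℕ) * (wf s)^(3-1))) (wf s) :=
        (((hasDerivAt_const _ _).sub ((hasDerivAt_id _).const_mul _)).add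
          ((hasDerivAt_pow 3 _).const_mul _))
      convert h1 using 1
      · rfl
      push_cast; ring
    exact hA.comp s (hwd s)
  have hGd : ∀ s ∈ B, HasDerivAt Gf (Gd s) s := by
    intro s hs
    exact (((hPd s).const_mul (6:ℂ)).div (hqd s hs) (hqne s hs)).const_add (6:ℂ)
  have habs_spow : ∀ s ∈ B, ‖s ^ ((1:ℂ)/2 - 1)‖ = (‖qf s‖)⁻¹ := by
    intro s hs
    rw [show ((1:ℂ)/2 - 1) = (((-1/2:ℝ)):ℂ) by norm_num, Complex.norm_cpow_real, abs_q,
      Real.sqrt_eq_rpow, ← Real.rpow_neg (norm_nonneg s)]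
    norm_num
  have hGdb : ∀ s ∈ B, ‖Gd s‖ ≤ 1/5 := by
    intro s hs
    have hA6 : (10:ℝ)^6 ≤ ‖qf s‖ := habsq s hs
    have hA0 : (0:ℝ) < ‖qf s‖ := by linarith
    have e1 : ‖6 * ((-(20/7) + (240/11) * (wf s)^2) * (-(2.5:ℂ) * wf s)) * qf s‖
        ≤ 168000 * ‖qf s‖ := by
      rw [norm_mul, norm_mul, norm_mul, norm_mul, norm_neg, h25abs,
        show ‖(6:ℂ)‖ = 6 by
          rw [show (6:ℂ) = (((6:ℝ)):ℂ) by norm_num, abs_lit _ (by norm_num)]]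
      have hE := hP'b (wf s) (hw8 s hs)
      have hW := hw8 s hs
      calc 6 * (‖-(20/7) + 240/11 * wf s ^ 2‖ * (5/2 * ‖wf s‖))
            * ‖qf s‖
          ≤ 6 * ((1400:ℝ) * (5/2 * 8)) * ‖qf s‖ := by gcongr
        _ = 168000 * ‖qf s‖ := by ring
    have e2 : ‖6 * Pf (wf s) * (((1:ℂ)/2) * s ^ ((1:ℂ)/2 - 1))‖
        ≤ 11400 * (‖qf s‖)⁻¹ := by
      rw [norm_mul, norm_mul, norm_mul, habs_spow s hs,
        show ‖(6:ℂ)‖ = 6 by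
          rw [show (6:ℂ) = (((6:ℝ)):ℂ) by norm_num, abs_lit _ (by norm_num)],
        show ‖(1:ℂ)/2‖ = 1/2 by
          rw [show ((1:ℂ)/2) = (((1/2:ℝ)):ℂ) by norm_num, abs_lit _ (by norm_num)]]
      have hPP := hPb (wf s) (hw8 s hs)
      calc 6 * ‖Pf (wf s)‖ * (1/2 * (‖qf s‖)⁻¹)
          ≤ 6 * (3800:ℝ) * (1/2 * (‖qf s‖)⁻¹) := by gcongr
        _ = 11400 * (‖qf s‖)⁻¹ := by ring
    have e3 : ‖Gd s‖ ≤ (168000 * ‖qf s‖ + 11400 * (‖qf s‖)⁻¹)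
        / (‖qf s‖)^2 := by
      rw [Gd, norm_div, norm_pow]
      gcongr
      exact le_trans (norm_sub_le _ _) (add_le_add e1 e2)
    have hAinv : (‖qf s‖)⁻¹ ≤ 1 := by
      rw [inv_le_one_iff₀]
      right; linarith
    calc ‖Gd s‖
        ≤ (168000 * ‖qf s‖ + 11400 * (‖qf s‖)⁻¹)
          / (‖qf s‖)^2 := e3
      _ ≤ 1/5 := by
          rw [div_le_iff₀ (by positivity)]
          nlinarith [mul_le_mul_of_nonneg_right hA6 hA0.le]
  have hTd : ∀ s ∈ B, HasDerivAt (Tf k) (-((Gf s)⁻¹ * Gd s) / 2.5) s := by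
    intro s hs
    have h1 : HasDerivAt (fun s => Complex.log (Gf s)) ((Gf s)⁻¹ * Gd s) s :=
      (Complex.hasDerivAt_log (hGslit s hs)).comp s (hGd s hs)
    exact (h1.const_sub (2 * Real.pi * k * Complex.I)).div_const 2.5
  have hTdb : ∀ s ∈ B, ‖-((Gf s)⁻¹ * Gd s) / 2.5‖ ≤ 1/2 := by
    intro s hs
    rw [norm_div, norm_neg, norm_mul, norm_inv, h25abs]
    have h2 := hGabs s hs
    have h3 := hGdb s hs
    have h4 : (‖Gf s‖)⁻¹ ≤ 1/5 := by
      rw [inv_le_comm₀ (by linarith) (by norm_num)]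
      linarith
    calc (‖Gf s‖)⁻¹ * ‖Gd s‖ / (5/2)
        ≤ (1/5) * (1/5) / (5/2) := by
          gcongr
      _ ≤ 1/2 := by norm_num
  have hlip : LipschitzOnWith (1/2 : ℝ≥0) (Tf k) B := by
    rw [hB]
    apply (convex_closedBall (ck k) (1/10)).lipschitzOnWith_of_nnnorm_hasDerivWithin_le
      (f' := fun s => -((Gf s)⁻¹ * Gd s) / 2.5)
      (fun s hs => ((hTd s (hB ▸ hs)).hasDerivWithinAt))
    intro s hs
    rw [← NNReal.coe_le_coe, coe_nnnorm]
    calc ‖_‖ ≤ 1/2 := hTdb s (hB ▸ hs)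
      _ = (((1:ℝ≥0)/2 : ℝ≥0) : ℝ) := by norm_num
  have hlog : ∀ s ∈ B, ‖Complex.log (Gf s) - Complex.log 6‖
      ≤ (1/5) * ‖Gf s - 6‖ := by
    intro s hs
    have hH : Convex ℝ {z : ℂ | 5 ≤ z.re} := convex_halfSpace_re_ge 5
    have hderiv : ∀ z ∈ {z : ℂ | 5 ≤ z.re},
        HasDerivWithinAt Complex.log z⁻¹ {z : ℂ | 5 ≤ z.re} z := by
      intro z hz
      simp only [Set.mem_setOf_eq] at hz
      exact (Complex.hasDerivAt_log
        (Complex.mem_slitPlane_iff.2 (Or.inl (by linarith)))).hasDerivWithinAt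
    have hbound : ∀ z ∈ {z : ℂ | 5 ≤ z.re}, ‖z⁻¹‖ ≤ 1/5 := by
      intro z hz
      simp only [Set.mem_setOf_eq] at hz
      rw [norm_inv]
      have h1 : 5 ≤ ‖z‖ := le_trans hz (Complex.re_le_norm z)
      rw [inv_le_comm₀ (by linarith) (by norm_num)]
      linarith
    have h6 : (6:ℂ) ∈ {z:ℂ | 5 ≤ z.re} := by norm_num [Set.mem_setOf_eq]
    have hGm : Gf s ∈ {z:ℂ | 5 ≤ z.re} := hGre s hs
    have := hH.norm_image_sub_le_of_norm_hasDerivWithin_le hderiv hbound h6 hGm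
    simpa using this
  have hmaps : Set.MapsTo (Tf k) B B := by
    intro s hs
    rw [hB, Metric.mem_closedBall, Complex.dist_eq, Tf_sub_ck, norm_div, h25abs]
    have h2 : ((Real.log 6 : ℝ):ℂ) = Complex.log 6 := by
      rw [Complex.ofReal_log (by norm_num : (0:ℝ) ≤ 6)]
      norm_num
    rw [h2, norm_sub_rev]
    calc ‖Complex.log (Gf s) - Complex.log 6‖ / (5/2)
        ≤ ((1/5) * (1/40)) / (5/2) := by
          gcongr
          calc ‖Complex.log (Gf s) - Complex.log 6‖
              ≤ (1/5) * ‖Gf s - 6‖ := hlog s hs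
            _ ≤ (1/5) * (1/40) := by
                have := hG6' s hs
                linarith
      _ ≤ 1/10 := by norm_num
  -- fixed point
  have hcomplete : IsComplete B := by rw [hB]; exact Metric.isClosed_closedBall.isComplete
  have hck : ck k ∈ B := by rw [hB]; exact Metric.mem_closedBall_self (by norm_num)
  have hcw : ContractingWith (1/2 : ℝ≥0) (hmaps.restrict (Tf k) B B) :=
    ⟨by rw [← NNReal.coe_lt_coe]; norm_num, hlip.mapsToRestrict hmaps⟩
  obtain ⟨y, hyB, hyfix, -, -⟩ :=
    ContractingWith.exists_fixedPoint' hcomplete hmaps hcw hck (edist_ne_top _ _)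
  have hfix : Tf k y = y := hyfix
  have hGneY := hGne y hyB
  have hexp : Complex.exp (-(2.5 * y)) = Gf y := by
    simp only [Tf] at hfix
    rw [div_eq_iff (by norm_num : (2.5:ℂ) ≠ 0)] at hfix
    have h2' : -(2.5 * y) = Complex.log (Gf y) - 2 * (Real.pi:ℂ) * (k:ℂ) * Complex.I := by
      linear_combination hfix
    rw [h2', Complex.exp_sub, Complex.exp_log hGneY]
    have h3 : Complex.exp (2 * (Real.pi:ℂ) * (k:ℂ) * Complex.I) = 1 := by
      have h := Complex.exp_int_mul_two_pi_mul_I (k:ℤ)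
      rw [show (((k:ℤ)):ℂ) * (2 * (Real.pi:ℂ) * Complex.I)
          = 2 * (Real.pi:ℂ) * (k:ℂ) * Complex.I by push_cast; ring] at h
      exact h
    rw [h3, div_one]
  refine ⟨y, ?_, (him y hyB).2, ?_⟩
  · have hq3 : y ^ ((1:ℂ)/2) * Complex.exp (-(2.5 * y)) = 6 * y ^ ((1:ℂ)/2)
        + 6 * (15/2 - (20/7) * Complex.exp (-(2.5 * y))
          + (80/11) * (Complex.exp (-(2.5 * y)))^3) := by
      have h0 : qf y * Gf y = 6 * qf y + 6 * Pf (wf y) := by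
        have hq := hqne y hyB
        rw [Gf]
        field_simp
      rw [← hexp] at h0
      exact h0
    have hw3 : Complex.exp (-(7.5 * y)) = Complex.exp (-(2.5 * y))^3 := by
      rw [← Complex.exp_nat_mul]
      congr 1
      push_cast
      ring
    rw [hw3]
    linear_combination (-(1:ℂ)/6) * hq3
  · have hd1 : y - ck k = (((Real.log 6 : ℝ):ℂ) - Complex.log (Gf y)) / 2.5 := by
      conv_lhs => rw [← hfix]
      exact Tf_sub_ck k y
    have hre2 : |y.re - (-(Real.log 6)/2.5)| = |(y - ck k).re| := by
      rw [Complex.sub_re, ck_re]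
    have h2 : ((Real.log 6 : ℝ):ℂ) = Complex.log 6 := by
      rw [Complex.ofReal_log (by norm_num : (0:ℝ) ≤ 6)]
      norm_num
    have h5 : Real.sqrt (k:ℝ) ≤ ‖qf y‖ := by
      rw [abs_q]
      exact Real.sqrt_le_sqrt (habs y hyB).2
    have h6 : 0 < Real.sqrt (k:ℝ) := Real.sqrt_pos.2 (by linarith)
    rw [hre2]
    calc |(y - ck k).re| ≤ ‖y - ck k‖ := Complex.abs_re_le_norm _
      _ = ‖Complex.log (Gf y) - Complex.log 6‖ / (5/2) := by
          rw [hd1, norm_div, h25abs, h2, norm_sub_rev]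
      _ ≤ ((1/5) * (22800 / ‖qf y‖)) / (5/2) := by
          gcongr
          calc ‖Complex.log (Gf y) - Complex.log 6‖
              ≤ (1/5) * ‖Gf y - 6‖ := hlog y hyB
            _ ≤ (1/5) * (22800 / ‖qf y‖) := by
                have := hG6 y hyB
                linarith
      _ ≤ 22800 / ‖qf y‖ := by
          have h7 : (0:ℝ) < ‖qf y‖ := by linarith [habsq y hyB]
          have h8 : (0:ℝ) ≤ 22800 / ‖qf y‖ := by positivity
          linarith
      _ ≤ 22800 / Real.sqrt (k:ℝ) := by gcongr

end FracChainAux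

/-- The fractional quasipolynomial
`d(s) = s^{1/2} + 15/2 − ((1/6)s^{1/2} + 20/7)e^{−2.5 s} + (80/11)e^{−7.5 s}`
has a chain of zeros asymptotic to the vertical line `Re s = −(ln 6)/2.5`,
which lies in the open left half-plane. -/
theorem fractional_example_neutral_chain
    (d : ℂ → ℂ)
    (hd : ∀ s : ℂ, d s =
      s ^ ((1 : ℂ)/2) + 15/2
        - ((1/6) * s ^ ((1 : ℂ)/2) + 20/7) * Complex.exp (-(2.5 * s))
        + (80/11) * Complex.exp (-(7.5 * s))) :
    (∃ s : ℕ → ℂ, (∀ j, d (s j) = 0) ∧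
      Tendsto (fun j => (s j).im) atTop atTop ∧
      Tendsto (fun j => (s j).re) atTop (𝓝 (-(Real.log 6) / 2.5))) ∧
    -(Real.log 6) / 2.5 < 0 := by
  constructor
  · have hkey := fun j : ℕ => FracChainAux.key (10^12 + j) (Nat.le_add_right _ _)
    choose ss h1 h2 h3 using hkey
    refine ⟨ss, ?_, ?_, ?_⟩
    · intro j
      rw [hd]
      exact h1 j
    · apply tendsto_atTop_mono (fun j => ?_) tendsto_natCast_atTop_atTop
      calc (j:ℝ) ≤ ((10^12 + j : ℕ):ℝ) := by push_cast; linarith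
        _ ≤ (ss j).im := h2 j
    · have h4 : Tendsto (fun j : ℕ => ((10^12 + j : ℕ):ℝ)) atTop atTop := by
        apply tendsto_atTop_mono (fun j => ?_) tendsto_natCast_atTop_atTop
        push_cast
        linarith
      have h5 : Tendsto (fun j : ℕ => Real.sqrt ((10^12 + j : ℕ):ℝ)) atTop atTop := by
        refine Tendsto.congr (fun j => (Real.sqrt_eq_rpow _).symm) ?_
        exact (tendsto_rpow_atTop (by norm_num : (0:ℝ) < 1/2)).comp h4
      have hb : Tendsto (fun j : ℕ => 22800 / Real.sqrt ((10^12 + j : ℕ):ℝ)) atTop (𝓝 0) :=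
        Tendsto.div_atTop tendsto_const_nhds h5
      have h6 : Tendsto (fun j : ℕ => (ss j).re - (-(Real.log 6) / 2.5)) atTop (𝓝 0) := by
        refine squeeze_zero_norm (fun j => ?_) hb
        rw [Real.norm_eq_abs]
        exact h3 j
      have h7 := h6.add_const (-(Real.log 6) / 2.5)
      simpa using h7
  · have hlog := Real.log_pos (by norm_num : (1:ℝ) < 6)
    have h25 : (0:ℝ) < 2.5 := by norm_num
    exact div_neg_of_neg_of_pos (by linarith) h25
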